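/- There exist 2×2 real matrices G₁, G₂, V₁, V₂ such that the matrices I + G₁, I + G₂ and I + G₁ + G₂ are all invertible, such that det(I + Gᵢ) · trace((I + Gᵢ)⁻¹ · Vᵢ) = 0 for i = 1, 2, but det(I + G₁ + G₂) · trace((I + G₁ + G₂)⁻¹ · (V₁ + V₂)) ≠ 0. In other words, the nonlinear ALE incompressibility expression (J F⁻¹ : ∇vᵀ) = det(I+∇u) · trace((I+∇u)⁻¹ ∇v) vanishing for two pairs (u₁, v₁) and (u₂, v₂) of deformation/velocity gradients does not imply that it vanishes for the sum (u₁ + u₂, v₁ + v₂). -/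
import Mathlib


open Matrix

lemma aux_inv1 : (!![(2:ℝ),0;0,1])⁻¹ = !![1/2,0;0,1] := by
  apply inv_eq_left_inv; norm_num [Matrix.mul_fin_two, ← Matrix.one_fin_two]
lemma aux_inv2 : (!![(1:ℝ),0;0,2])⁻¹ = !![1,0;0,1/2] := by
  apply inv_eq_left_inv; norm_num [Matrix.mul_fin_two, ← Matrix.one_fin_two]
lemma aux_inv3 : (!![(2:ℝ),0;0,2])⁻¹ = !![1/2,0;0,1/2] := by
  apply inv_eq_left_inv; norm_num [Matrix.mul_fin_two, ← Matrix.one_fin_two]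

lemma aux_add1 : (1 + !![(1:ℝ),0;0,0]) = !![2,0;0,1] := by
  rw [Matrix.one_fin_two]; norm_num
lemma aux_add2 : (1 + !![(0:ℝ),0;0,1]) = !![1,0;0,2] := by
  rw [Matrix.one_fin_two]; norm_num
lemma aux_add3 : (1 + !![(1:ℝ),0;0,0] + !![0,0;0,1]) = !![2,0;0,2] := by
  rw [Matrix.one_fin_two]; norm_num
lemma aux_add4 : (!![(2:ℝ),0;0,-1] + !![-1,0;0,2]) = !![1,0;0,1] := by
  norm_num

/-- The nonlinear ALE incompressibility expression
`det(I + G) * trace((I + G)⁻¹ * V)` is not additive: it can vanish for two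
pairs `(G₁, V₁)`, `(G₂, V₂)` but not for their sum `(G₁ + G₂, V₁ + V₂)`. -/
theorem ale_incompressibility_not_additive :
    ∃ G₁ G₂ V₁ V₂ : Matrix (Fin 2) (Fin 2) ℝ,
      IsUnit (1 + G₁) ∧ IsUnit (1 + G₂) ∧ IsUnit (1 + G₁ + G₂) ∧
      (1 + G₁).det * Matrix.trace ((1 + G₁)⁻¹ * V₁) = 0 ∧
      (1 + G₂).det * Matrix.trace ((1 + G₂)⁻¹ * V₂) = 0 ∧
      (1 + G₁ + G₂).det * Matrix.trace ((1 + G₁ + G₂)⁻¹ * (V₁ + V₂)) ≠ 0 := by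
  refine ⟨!![1,0;0,0], !![0,0;0,1], !![2,0;0,-1], !![-1,0;0,2], ?_, ?_, ?_, ?_, ?_, ?_⟩ <;>
    norm_num [Matrix.isUnit_iff_isUnit_det, aux_add1, aux_add2, aux_add3, aux_add4,
      aux_inv1, aux_inv2, aux_inv3, Matrix.det_fin_two_of, Matrix.mul_fin_two,
      Matrix.trace_fin_two_of]
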